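/- For the graph G on 11 vertices underlying the minimal flag triangulation of ℝP² (with 30 edges, given explicitly by the edge set of the triangulation in Figure 5 of the paper), the essential density m(G) equals 30/11, and G is strictly balanced: every proper nonempty subgraph H of G satisfies |E(H)|/|V(H)| < 30/11. -/

import Mathlib

/-- The graph on 11 vertices (here `v_i` is `i - 1 : Fin 11`) underlying the minimal
flag triangulation of `ℝP²` of Figure 5 of the paper, given by its 30 edges. -/
def rpTwoGraph : SimpleGraph (Fin 11) :=
  SimpleGraph.fromEdgeSet
    {s(0,1), s(0,7), s(1,2), s(1,8), s(2,8), s(2,9), s(8,9), s(0,8), s(9,10), s(8,10),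
     s(7,8), s(7,10), s(1,5), s(0,5), s(4,9), s(4,10), s(0,4), s(4,5), s(5,10), s(3,4),
     s(0,3), s(3,7), s(5,6), s(6,10), s(6,7), s(3,6), s(3,9), s(1,6), s(2,3), s(2,6)}

/-!
Split every edge `uv` of `G` into shares `w u v + w v u = 1` so that every vertex receives a total
share of exactly `30/11`: take `w v u = 1/2 + t v u / 22` for an integer flow `t` with divergence
`60 - 11 deg v` at `v`. Summing the shares over the vertices of a subgraph `H` counts every edge of
`H` once, plus the shares that vertices of `H` hold in edges of `G` missing from `H`; hence
`|E(H)| ≤ (30/11) |V(H)|`. All shares are positive, so in the case of equality `H` contains every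
edge at each of its vertices, and `H = ⊤` as `G` is connected.
-/

open Finset

namespace SimpleGraph

variable {V : Type*} {G : SimpleGraph V}

theorem Subgraph.eq_top_of_forall_adj (hconn : G.Connected) {H : G.Subgraph}
    (hne : H.verts.Nonempty) (hadj : ∀ v ∈ H.verts, ∀ u, G.Adj v u → H.Adj v u) : H = ⊤ := by
  obtain ⟨v₀, hv₀⟩ := hne
  have hverts : ∀ u, u ∈ H.verts := fun u => by
    obtain ⟨p⟩ := hconn.preconnected v₀ u
    induction p with
    | nil => exact hv₀
    | cons h _ ih => exact ih (H.edge_vert (hadj _ hv₀ _ h).symm)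
  exact le_antisymm le_top ⟨fun v _ => hverts v, fun v u h => hadj v (hverts v) u h⟩

variable [Fintype V] [DecidableRel G.Adj]
  {𝕜 : Type*} [Field 𝕜] [LinearOrder 𝕜] [IsStrictOrderedRing 𝕜] {w : V → V → 𝕜} {d : 𝕜}

theorem sum_sum_neighborFinset_eq_card_edgeFinset (hw : ∀ u v, G.Adj u v → w u v + w v u = 1) :
    ∑ v, ∑ u ∈ G.neighborFinset v, w v u = #G.edgeFinset := by
  have hswap : ∑ v, ∑ u ∈ G.neighborFinset v, w v u = ∑ v, ∑ u ∈ G.neighborFinset v, w u v := by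
    simp only [neighborFinset_eq_filter, sum_filter]
    rw [sum_comm]
    exact sum_congr rfl fun v _ => sum_congr rfl fun u _ => if_congr (G.adj_comm u v) rfl rfl
  have htwice : ∑ v, ∑ u ∈ G.neighborFinset v, (w v u + w u v) = 2 * #G.edgeFinset := by
    calc ∑ v, ∑ u ∈ G.neighborFinset v, (w v u + w u v) = ∑ v, (G.degree v : 𝕜) := by
          refine sum_congr rfl fun v _ => ?_
          rw [sum_congr rfl fun u hu => hw v u ((G.mem_neighborFinset v u).1 hu), sum_const,
            card_neighborFinset_eq_degree, nsmul_one]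
      _ = 2 * #G.edgeFinset := by exact_mod_cast G.sum_degrees_eq_twice_card_edges
  simp only [sum_add_distrib, ← hswap] at htwice
  linarith

theorem card_edgeFinset_eq_mul_card (hw : ∀ u v, G.Adj u v → w u v + w v u = 1)
    (hload : ∀ v, ∑ u ∈ G.neighborFinset v, w v u = d) :
    (#G.edgeFinset : 𝕜) = d * Fintype.card V := by
  rw [← sum_sum_neighborFinset_eq_card_edgeFinset hw, sum_congr rfl fun v _ => hload v, sum_const,
    card_univ, nsmul_eq_mul, mul_comm]

namespace Subgraph

open Classical in
theorem card_edgeSet_add_sum_sum_not_adj (H : G.Subgraph)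
    (hw : ∀ u v, G.Adj u v → w u v + w v u = 1) :
    (H.edgeSet.ncard : 𝕜) + ∑ v ∈ H.verts.toFinset, ∑ u ∈ G.neighborFinset v with ¬H.Adj v u, w v u
      = ∑ v ∈ H.verts.toFinset, ∑ u ∈ G.neighborFinset v, w v u := by
  have hE := sum_sum_neighborFinset_eq_card_edgeFinset (G := H.spanningCoe) (w := w)
    fun u v h => hw u v (H.adj_sub h)
  have hcard : #H.spanningCoe.edgeFinset = H.edgeSet.ncard := by
    rw [← Set.ncard_coe_finset, coe_edgeFinset, edgeSet_spanningCoe]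
  have hN : ∀ v, H.spanningCoe.neighborFinset v = {u ∈ G.neighborFinset v | H.Adj v u} := by
    intro v
    ext u
    simp only [mem_neighborFinset, mem_filter, spanningCoe_adj]
    exact ⟨fun h => ⟨H.adj_sub h, h⟩, And.right⟩
  have hsupp : ∑ v, ∑ u ∈ H.spanningCoe.neighborFinset v, w v u
      = ∑ v ∈ H.verts.toFinset, ∑ u ∈ H.spanningCoe.neighborFinset v, w v u := by
    refine (sum_subset (subset_univ _) fun v _ hv => sum_eq_zero fun u hu => ?_).symm
    exact absurd (H.edge_vert ((mem_neighborFinset _ _ _).1 hu)) (by simpa using hv)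
  rw [← hcard, ← hE, hsupp, ← sum_add_distrib]
  exact sum_congr rfl fun v _ => by rw [hN, sum_filter_add_sum_filter_not]

open Classical in
theorem sum_toFinset_verts_sum_neighborFinset_le (H : G.Subgraph)
    (hload : ∀ v, ∑ u ∈ G.neighborFinset v, w v u ≤ d) :
    ∑ v ∈ H.verts.toFinset, ∑ u ∈ G.neighborFinset v, w v u ≤ d * H.verts.ncard := by
  rw [Set.ncard_eq_toFinset_card', mul_comm, ← nsmul_eq_mul]
  exact sum_le_card_nsmul _ _ d fun v _ => hload v

theorem card_edgeSet_le_mul_card_verts (hw : ∀ u v, G.Adj u v → w u v + w v u = 1)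
    (hw₀ : ∀ u v, G.Adj u v → 0 ≤ w u v) (hload : ∀ v, ∑ u ∈ G.neighborFinset v, w v u ≤ d)
    (H : G.Subgraph) : (H.edgeSet.ncard : 𝕜) ≤ d * H.verts.ncard := by
  classical
  calc (H.edgeSet.ncard : 𝕜) ≤ H.edgeSet.ncard
        + ∑ v ∈ H.verts.toFinset, ∑ u ∈ G.neighborFinset v with ¬H.Adj v u, w v u :=
        le_add_of_nonneg_right <| sum_nonneg fun v _ => sum_nonneg fun u hu =>
          hw₀ v u ((G.mem_neighborFinset v u).1 (mem_filter.1 hu).1)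
    _ = ∑ v ∈ H.verts.toFinset, ∑ u ∈ G.neighborFinset v, w v u :=
        H.card_edgeSet_add_sum_sum_not_adj hw
    _ ≤ d * H.verts.ncard := H.sum_toFinset_verts_sum_neighborFinset_le hload

theorem eq_top_of_mul_card_verts_le (hconn : G.Connected)
    (hw : ∀ u v, G.Adj u v → w u v + w v u = 1) (hpos : ∀ u v, G.Adj u v → 0 < w u v)
    (hload : ∀ v, ∑ u ∈ G.neighborFinset v, w v u ≤ d) {H : G.Subgraph}
    (hne : H.verts.Nonempty) (hle : d * H.verts.ncard ≤ H.edgeSet.ncard) : H = ⊤ := by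
  classical
  refine eq_top_of_forall_adj hconn hne fun v hv u huv => ?_
  by_contra hvu
  have hshare : ∀ v, ∀ u ∈ {u ∈ G.neighborFinset v | ¬H.Adj v u}, 0 < w v u :=
    fun v u hu => hpos v u ((G.mem_neighborFinset v u).1 (mem_filter.1 hu).1)
  have hdefect : 0 < ∑ v ∈ H.verts.toFinset, ∑ u ∈ G.neighborFinset v with ¬H.Adj v u, w v u :=
    sum_pos' (fun v _ => sum_nonneg fun u hu => (hshare v u hu).le)
      ⟨v, by simpa using hv, sum_pos' (fun u hu => (hshare v u hu).le)
        ⟨u, mem_filter.2 ⟨(G.mem_neighborFinset v u).2 huv, hvu⟩, hpos v u huv⟩⟩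
  linarith [H.card_edgeSet_add_sum_sum_not_adj (w := w) hw,
    H.sum_toFinset_verts_sum_neighborFinset_le hload]

end Subgraph

end SimpleGraph

open SimpleGraph

instance : DecidableRel rpTwoGraph.Adj := fun _ _ =>
  decidable_of_iff _ (fromEdgeSet_adj _).symm

theorem rpTwoGraph_connected : rpTwoGraph.Connected :=
  (pathGraph_connected 10).mono fun u v h => by
    rw [pathGraph_adj] at h
    revert u v
    decide

def rpTwoFlow : Fin 11 → Fin 11 → ℤ :=
  ![![ 0, -2,  0,  0, -2, -2,  0,  0,  0,  0,  0],
    ![ 2,  0,  0,  0,  0,  0,  2,  0,  1,  0,  0],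
    ![ 0,  0,  0,  2,  0,  0,  2,  0,  1,  0,  0],
    ![ 0,  0, -2,  0, -1,  0,  0, -2,  0, -1,  0],
    ![ 2,  0,  0,  1,  0,  0,  0,  0,  0,  0,  2],
    ![ 2,  0,  0,  0,  0,  0,  2,  0,  0,  0,  1],
    ![ 0, -2, -2,  0,  0, -2,  0,  0,  0,  0,  0],
    ![ 0,  0,  0,  2,  0,  0,  0,  0,  2,  0,  1],
    ![ 0, -1, -1,  0,  0,  0,  0, -2,  0, -2,  0],
    ![ 0,  0,  0,  1,  0,  0,  0,  0,  2,  0,  2],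
    ![ 0,  0,  0,  0, -2, -1,  0, -1,  0, -2,  0]]

theorem rpTwoFlow_add_swap (u v : Fin 11) : rpTwoFlow u v + rpTwoFlow v u = 0 := by
  revert u v
  decide

theorem neg_eleven_lt_rpTwoFlow (u v : Fin 11) : -11 < rpTwoFlow u v := by
  revert u v
  decide

theorem sum_rpTwoFlow (v : Fin 11) :
    ∑ u ∈ rpTwoGraph.neighborFinset v, rpTwoFlow v u = 60 - 11 * rpTwoGraph.degree v := by
  revert v
  decide

def rpTwoWeight (v u : Fin 11) : ℚ := 1 / 2 + rpTwoFlow v u / 22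

theorem rpTwoWeight_add_swap (u v : Fin 11) : rpTwoWeight u v + rpTwoWeight v u = 1 := by
  have h : (rpTwoFlow u v : ℚ) + rpTwoFlow v u = 0 := by exact_mod_cast rpTwoFlow_add_swap u v
  rw [rpTwoWeight, rpTwoWeight]
  linarith

theorem rpTwoWeight_pos (u v : Fin 11) : 0 < rpTwoWeight u v := by
  have h : (-11 : ℚ) < rpTwoFlow u v := by exact_mod_cast neg_eleven_lt_rpTwoFlow u v
  rw [rpTwoWeight]
  linarith

theorem sum_rpTwoWeight (v : Fin 11) :
    ∑ u ∈ rpTwoGraph.neighborFinset v, rpTwoWeight v u = 30 / 11 := by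
  have h : ∑ u ∈ rpTwoGraph.neighborFinset v, (rpTwoFlow v u : ℚ)
      = 60 - 11 * rpTwoGraph.degree v := by exact_mod_cast sum_rpTwoFlow v
  simp only [rpTwoWeight, sum_add_distrib, ← sum_div, h, sum_const, card_neighborFinset_eq_degree,
    nsmul_eq_mul]
  ring

/-- For the graph `G` underlying the minimal flag triangulation of `ℝP²`, every
nonempty subgraph `H` satisfies `|E(H)|/|V(H)| ≤ 30/11`, the whole graph attains the
ratio `30/11` (so the essential density is `m(G) = 30/11`), and `G` is strictly
balanced: every proper nonempty subgraph has ratio strictly less than `30/11`. -/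
theorem rpTwoGraph_essential_density :
    (∀ H : rpTwoGraph.Subgraph, H.verts.Nonempty →
      (H.edgeSet.ncard : ℚ) / (H.verts.ncard : ℚ) ≤ 30 / 11) ∧
    ((((⊤ : rpTwoGraph.Subgraph).edgeSet.ncard : ℚ) /
        (((⊤ : rpTwoGraph.Subgraph).verts.ncard : ℚ))) = 30 / 11) ∧
    (∀ H : rpTwoGraph.Subgraph, H ≠ ⊤ → H.verts.Nonempty →
      (H.edgeSet.ncard : ℚ) / (H.verts.ncard : ℚ) < 30 / 11) := by
  have hw u v (_ : rpTwoGraph.Adj u v) := rpTwoWeight_add_swap u v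
  have hpos u v (_ : rpTwoGraph.Adj u v) := rpTwoWeight_pos u v
  have hload v := (sum_rpTwoWeight v).le
  refine ⟨fun H hne => ?_, ?_, fun H hH hne => ?_⟩
  · rw [div_le_iff₀ (by exact_mod_cast hne.ncard_pos)]
    exact Subgraph.card_edgeSet_le_mul_card_verts hw (fun u v h => (hpos u v h).le) hload H
  · rw [Subgraph.edgeSet_top, Subgraph.verts_top, ← coe_edgeFinset, Set.ncard_coe_finset,
      card_edgeFinset_eq_mul_card hw sum_rpTwoWeight, Set.ncard_univ, Nat.card_eq_fintype_card]
    norm_num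
  · rw [div_lt_iff₀ (by exact_mod_cast hne.ncard_pos)]
    exact lt_of_not_ge fun hle => hH (Subgraph.eq_top_of_mul_card_verts_le rpTwoGraph_connected
      hw hpos hload hne hle)
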